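/- Let $D_n = \hat{M}_n - M_n$ where $\hat{M}_n = K_{n,1}/n$ and $M_n = \sum_j p_j\mathbb{1}\{X_{n,j}=0\}$, with $X_{n,j}$ independent Binomial$(n,p_j)$ and $\sum_j p_j<\infty$. Then $\mathbb{E}[D_n] \leq \frac{2}{n(n-1)}\mathbb{E}[K_{n,2}]$ for all $n\geq 2$, where $K_{n,2} = \sum_j \mathbb{1}\{X_{n,j}=2\}$. -/

import Mathlib

/-!
Since `P(X_j = k)` is the binomial mass, linearity gives
`𝔼[D_n] = ∑ⱼ (pⱼ (1 - pⱼ)^(n-1) - pⱼ (1 - pⱼ)^n) = ∑ⱼ pⱼ² (1 - pⱼ)^(n-1)`, while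
`2 / (n (n-1)) 𝔼[K_{n,2}] = ∑ⱼ pⱼ² (1 - pⱼ)^(n-2)`; compare termwise. Expectation and the sum
over `j` commute because the summands are nonnegative and `∑ⱼ pⱼ < ∞` bounds the expected sums.
-/

open MeasureTheory ProbabilityTheory Real

theorem ite_eq_indicator_setOf {Ω β M : Type*} [Zero M] [DecidableEq β] (Y : Ω → β) (b : β)
    (c : M) : (fun ω => if Y ω = b then c else 0) = {ω | Y ω = b}.indicator fun _ => c := by
  ext ω
  simp [Set.indicator_apply]

section Indicator

variable {Ω β : Type*} [MeasurableSpace Ω] {μ : Measure Ω} [MeasurableSpace β]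
  [MeasurableSingletonClass β] [DecidableEq β] {Y : Ω → β} {b : β}

theorem integral_ite_eq_mul_measureReal (hY : Measurable Y) (c : ℝ) :
    ∫ ω, (if Y ω = b then c else 0) ∂μ = c * μ.real {ω | Y ω = b} := by
  rw [ite_eq_indicator_setOf, integral_indicator_const c (s := {ω | Y ω = b})
    (hY (measurableSet_singleton b)), smul_eq_mul, mul_comm]

theorem integrable_ite_const [IsFiniteMeasure μ] (hY : Measurable Y) (c : ℝ) :
    Integrable (fun ω => if Y ω = b then c else 0) μ := by
  rw [ite_eq_indicator_setOf]
  exact (integrable_const c).indicator (hY (measurableSet_singleton b))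

end Indicator

section TsumIndicator

variable {Ω ι β : Type*} [MeasurableSpace Ω] {μ : Measure Ω} [Countable ι]

theorem integrable_tsum_of_nonneg {f : ι → Ω → ℝ} (hf : ∀ i, Integrable (f i) μ)
    (hf0 : ∀ i ω, 0 ≤ f i ω) (hsum : Summable fun i => ∫ ω, f i ω ∂μ) :
    Integrable (fun ω => ∑' i, f i ω) μ := by
  -- Where the series diverges, both sides are the junk value `0`.
  have htoReal : (fun ω => ∑' i, f i ω) = fun ω => (∑' i, ENNReal.ofReal (f i ω)).toReal := by
    funext ω
    rw [ENNReal.tsum_toReal_eq fun _ => ENNReal.ofReal_ne_top]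
    exact tsum_congr fun i => (ENNReal.toReal_ofReal (hf0 i ω)).symm
  have hmeas : ∀ i, AEMeasurable (fun ω => ENNReal.ofReal (f i ω)) μ :=
    fun i => (hf i).aemeasurable.ennreal_ofReal
  rw [htoReal]
  refine integrable_toReal_of_lintegral_ne_top (AEMeasurable.tsum hmeas) ?_
  rw [lintegral_tsum hmeas]
  simp_rw [← ofReal_integral_eq_lintegral_ofReal (hf _) (Filter.Eventually.of_forall (hf0 _))]
  rw [← ENNReal.ofReal_tsum_of_nonneg (fun i => integral_nonneg (hf0 i)) hsum]
  exact ENNReal.ofReal_ne_top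

variable [IsFiniteMeasure μ] [MeasurableSpace β] [MeasurableSingletonClass β] [DecidableEq β]
  {Y : ι → Ω → β} {b : β} {w : ι → ℝ}

theorem integrable_tsum_ite (hY : ∀ i, Measurable (Y i)) (hw : ∀ i, 0 ≤ w i)
    (hsum : Summable fun i => w i * μ.real {ω | Y i ω = b}) :
    Integrable (fun ω => ∑' i, if Y i ω = b then w i else 0) μ :=
  integrable_tsum_of_nonneg (fun i => integrable_ite_const (hY i) (w i))
    (fun i ω => by split_ifs <;> simp [hw i])
    (by simpa only [integral_ite_eq_mul_measureReal (hY _)] using hsum)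

theorem integral_tsum_ite (hY : ∀ i, Measurable (Y i)) (hw : ∀ i, 0 ≤ w i)
    (hsum : Summable fun i => w i * μ.real {ω | Y i ω = b}) :
    ∫ ω, (∑' i, if Y i ω = b then w i else 0) ∂μ = ∑' i, w i * μ.real {ω | Y i ω = b} := by
  have hnorm : ∀ i ω, ‖if Y i ω = b then w i else 0‖ = if Y i ω = b then w i else 0 :=
    fun i ω => by split_ifs <;> simp [hw i]
  rw [← integral_tsum_of_summable_integral_norm (fun i => integrable_ite_const (hY i) (w i))]
  · simp only [integral_ite_eq_mul_measureReal (hY _)]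
  · simpa only [hnorm, integral_ite_eq_mul_measureReal (hY _)] using hsum

end TsumIndicator

def binomialMass (n k : ℕ) (p : ℝ) : ℝ := n.choose k * p ^ k * (1 - p) ^ (n - k)

section BinomialMass

variable {n k : ℕ} {p : ℝ}

theorem binomialMass_nonneg (h0 : 0 ≤ p) (h1 : p ≤ 1) : 0 ≤ binomialMass n k p := by
  unfold binomialMass
  have : 0 ≤ 1 - p := by linarith
  positivity

theorem binomialMass_le_choose_mul (hk : k ≠ 0) (h0 : 0 ≤ p) (h1 : p ≤ 1) :
    binomialMass n k p ≤ n.choose k * p := by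
  unfold binomialMass
  have hpk : p ^ k ≤ p := pow_le_of_le_one h0 h1 hk
  have hq : (1 - p) ^ (n - k) ≤ 1 := pow_le_one₀ (by linarith) (by linarith)
  calc (n.choose k : ℝ) * p ^ k * (1 - p) ^ (n - k) ≤ n.choose k * p * 1 := by gcongr
    _ = n.choose k * p := mul_one _

theorem binomialMass_zero_le_one (h0 : 0 ≤ p) (h1 : p ≤ 1) : binomialMass n 0 p ≤ 1 := by
  simpa [binomialMass] using pow_le_one₀ (n := n) (sub_nonneg.2 h1) (by linarith)

theorem binomialMass_one_div_sub_le (hn : 2 ≤ n) (h0 : 0 ≤ p) (h1 : p ≤ 1) :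
    binomialMass n 1 p / n - p * binomialMass n 0 p ≤ 2 / (n * (n - 1)) * binomialMass n 2 p := by
  obtain ⟨m, rfl⟩ : ∃ m, n = m + 2 := ⟨n - 2, by omega⟩
  have hlhs : binomialMass (m + 2) 1 p / (m + 2 : ℕ) - p * binomialMass (m + 2) 0 p
      = p ^ 2 * (1 - p) ^ (m + 1) := by
    simp only [binomialMass, Nat.choose_one_right, Nat.choose_zero_right]
    rw [show m + 2 - 1 = m + 1 by omega, Nat.sub_zero]
    field_simp
    ring
  have hrhs : 2 / ((m + 2 : ℕ) * ((m + 2 : ℕ) - 1)) * binomialMass (m + 2) 2 p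
      = p ^ 2 * (1 - p) ^ m := by
    have hm : ((m + 2 : ℕ) : ℝ) - 1 ≠ 0 := by
      push_cast
      linarith [(m.cast_nonneg : (0 : ℝ) ≤ m)]
    simp only [binomialMass, Nat.cast_choose_two, Nat.add_sub_cancel]
    field_simp
  rw [hlhs, hrhs]
  exact mul_le_mul_of_nonneg_left (pow_le_pow_of_le_one (by linarith) (by linarith) m.le_succ)
    (sq_nonneg p)

end BinomialMass

theorem stmt_general
    {Ω : Type*} [MeasurableSpace Ω] (μ : Measure Ω) [IsProbabilityMeasure μ]
    (p : ℕ → ℝ) (hp : ∀ j, p j ∈ Set.Ioo (0 : ℝ) 1) (hsum : Summable p)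
    (n : ℕ) (X : ℕ → Ω → ℕ)
    (hmeas : ∀ j, Measurable (X j))
    (hbin : ∀ j k, μ {ω | X j ω = k} =
      ENNReal.ofReal ((n.choose k : ℝ) * p j ^ k * (1 - p j) ^ (n - k)))
    (hn : 2 ≤ n) :
    (∫ ω, ((∑' j, if X j ω = 1 then (1 : ℝ) else 0) / n
        - ∑' j, if X j ω = 0 then p j else 0) ∂μ)
      ≤ 2 / (n * (n - 1)) *
          ∫ ω, (∑' j, if X j ω = 2 then (1 : ℝ) else 0) ∂μ := by
  have h0 : ∀ j, 0 ≤ p j := fun j => (hp j).1.le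
  have h1 : ∀ j, p j ≤ 1 := fun j => (hp j).2.le
  have hmass : ∀ j k, μ.real {ω | X j ω = k} = binomialMass n k (p j) := fun j k => by
    rw [measureReal_def, hbin]
    exact ENNReal.toReal_ofReal (binomialMass_nonneg (h0 j) (h1 j))
  have hsK : ∀ k, k ≠ 0 → Summable fun j => 1 * μ.real {ω | X j ω = k} := fun k hk => by
    simp only [one_mul, hmass]
    exact (hsum.mul_left _).of_nonneg_of_le (fun j => binomialMass_nonneg (h0 j) (h1 j))
      fun j => binomialMass_le_choose_mul hk (h0 j) (h1 j)
  have hsM : Summable fun j => p j * μ.real {ω | X j ω = 0} := by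
    simp only [hmass]
    exact hsum.of_nonneg_of_le (fun j => mul_nonneg (h0 j) (binomialMass_nonneg (h0 j) (h1 j)))
      fun j => mul_le_of_le_one_right (h0 j) (binomialMass_zero_le_one (h0 j) (h1 j))
  have hK : ∀ k, k ≠ 0 → ∫ ω, (∑' j, if X j ω = k then (1 : ℝ) else 0) ∂μ
      = ∑' j, 1 * μ.real {ω | X j ω = k} := fun k hk =>
    integral_tsum_ite hmeas (fun _ => zero_le_one) (hsK k hk)
  have hint1 := integrable_tsum_ite hmeas (fun _ => zero_le_one) (hsK 1 one_ne_zero)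
  have hintM := integrable_tsum_ite hmeas h0 hsM
  rw [integral_sub (hint1.div_const _) hintM, integral_div, hK 1 one_ne_zero, hK 2 two_ne_zero,
    integral_tsum_ite hmeas h0 hsM]
  simp only [one_mul, hmass] at hsK hsM ⊢
  calc (∑' j, binomialMass n 1 (p j)) / n - ∑' j, p j * binomialMass n 0 (p j)
      = ∑' j, (binomialMass n 1 (p j) / n - p j * binomialMass n 0 (p j)) := by
        rw [← tsum_div_const, ((hsK 1 one_ne_zero).div_const _).tsum_sub hsM]
    _ ≤ ∑' j, 2 / (n * (n - 1)) * binomialMass n 2 (p j) :=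
        Summable.tsum_le_tsum (fun j => binomialMass_one_div_sub_le hn (h0 j) (h1 j))
          (((hsK 1 one_ne_zero).div_const _).sub hsM) ((hsK 2 two_ne_zero).mul_left _)
    _ = 2 / (n * (n - 1)) * ∑' j, binomialMass n 2 (p j) := tsum_mul_left

theorem stmt
    {Ω : Type*} [MeasurableSpace Ω] (μ : Measure Ω) [IsProbabilityMeasure μ]
    (p : ℕ → ℝ) (hp : ∀ j, p j ∈ Set.Ioo (0 : ℝ) 1) (hsum : Summable p)
    (n : ℕ) (X : ℕ → Ω → ℕ)
    (hmeas : ∀ j, Measurable (X j))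
    (hindep : iIndepFun X μ)
    (hbin : ∀ j k, μ {ω | X j ω = k} =
      ENNReal.ofReal ((n.choose k : ℝ) * p j ^ k * (1 - p j) ^ (n - k)))
    (hn : 2 ≤ n) :
    (∫ ω, ((∑' j, if X j ω = 1 then (1 : ℝ) else 0) / n
        - ∑' j, if X j ω = 0 then p j else 0) ∂μ)
      ≤ 2 / (n * (n - 1)) *
          ∫ ω, (∑' j, if X j ω = 2 then (1 : ℝ) else 0) ∂μ :=
  stmt_general μ p hp hsum n X hmeas hbin hn
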